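/- arXiv:0711.1592 — 6 statements merged into one kernel-verified Lean document; each statement's English description precedes it below -/
import Mathlib

section
/- If A is an associative algebra with a linear operator B satisfying μ·B(fg) + B(f)B(g) = B(B(f)g + fB(g)) for a scalar μ, then the new product f * g := B(f)g + fB(g) − μfg is associative. -/
/-!
The Rota–Baxter identity says exactly that `B` turns the double product
`f ⋆ g = B f * g + f * B g - μ • (f * g)` into the product of `A`: `B (f ⋆ g) = B f * B g`.
Using this once on each side, both `(f ⋆ g) ⋆ h` and `f ⋆ (g ⋆ h)` expand to the same expression
`B f * B g * h + B f * g * B h + f * B g * B h - μ • (B f * g * h + f * B g * h + f * g * B h)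
  + (μ * μ) • (f * g * h)`.
-/

namespace RotaBaxter

variable {R A : Type*} [CommSemiring R] [Ring A] [Algebra R A]

def IsRotaBaxter (μ : R) (B : A →ₗ[R] A) : Prop :=
  ∀ f g : A, μ • B (f * g) + B f * B g = B (B f * g + f * B g)

def doubleProduct (μ : R) (B : A →ₗ[R] A) (f g : A) : A :=
  B f * g + f * B g - μ • (f * g)

variable {μ : R} {B : A →ₗ[R] A}

theorem map_doubleProduct (hB : IsRotaBaxter μ B) (f g : A) :
    B (doubleProduct μ B f g) = B f * B g := by
  rw [doubleProduct, map_sub, map_smul, ← hB, add_sub_cancel_left]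

theorem doubleProduct_doubleProduct_left (hB : IsRotaBaxter μ B) (f g h : A) :
    doubleProduct μ B (doubleProduct μ B f g) h =
      B f * B g * h + B f * g * B h + f * B g * B h
        - μ • (B f * g * h + f * B g * h + f * g * B h) + (μ * μ) • (f * g * h) := by
  rw [doubleProduct, map_doubleProduct hB, doubleProduct]
  simp only [smul_sub, smul_add, smul_mul_assoc, smul_smul, sub_mul, add_mul]
  abel

theorem doubleProduct_doubleProduct_right (hB : IsRotaBaxter μ B) (f g h : A) :
    doubleProduct μ B f (doubleProduct μ B g h) =
      B f * B g * h + B f * g * B h + f * B g * B h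
        - μ • (B f * g * h + f * B g * h + f * g * B h) + (μ * μ) • (f * g * h) := by
  rw [doubleProduct, map_doubleProduct hB, doubleProduct]
  simp only [smul_sub, smul_add, mul_smul_comm, smul_smul, mul_sub, mul_add, mul_assoc]
  abel

theorem doubleProduct_assoc (hB : IsRotaBaxter μ B) (f g h : A) :
    doubleProduct μ B (doubleProduct μ B f g) h = doubleProduct μ B f (doubleProduct μ B g h) := by
  rw [doubleProduct_doubleProduct_left hB, doubleProduct_doubleProduct_right hB]

end RotaBaxter

theorem rota_baxter_double_product_assoc
    {R A : Type*} [CommRing R] [Ring A] [Algebra R A]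
    (μ : R) (B : A →ₗ[R] A)
    (hB : ∀ f g : A, μ • B (f * g) + B f * B g = B (B f * g + f * B g)) :
    ∀ f g h : A,
      (B (B f * g + f * B g - μ • (f * g)) * h
        + (B f * g + f * B g - μ • (f * g)) * B h
        - μ • ((B f * g + f * B g - μ • (f * g)) * h))
      =
      (B f * (B g * h + g * B h - μ • (g * h))
        + f * B (B g * h + g * B h - μ • (g * h))
        - μ • (f * (B g * h + g * B h - μ • (g * h)))) :=
  RotaBaxter.doubleProduct_assoc hB
end

section
/- Euler–Maclaurin formula for polynomials: for every polynomial f ∈ ℝ[x] and every n ∈ ℕ, f(1) + f(2) + ... + f(n) = ∫₀ⁿ f(t) dt + (1/2)(f(n) − f(0)) + ∑_{p≥1} (b_{2p}/(2p)!)·(f^{(2p−1)}(n) − f^{(2p−1)}(0)), where the sum is finite since f is a polynomial. -/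
/-!
Writing `B⁺ = bernoulli'` (the convention `B⁺₁ = +1/2`), one first proves
`∑_{k=1}^n f(k) = ∫₀ⁿ f + ∑_{k ≥ 1} B⁺ₖ / k! (f^{(k-1)}(n) - f^{(k-1)}(0))`.
Both sides are linear in `f`, and for `f = X ^ m` this is Faulhaber's formula
`∑_{k=1}^n k^m = ∑_{i ≤ m} B⁺ᵢ (m+1).choose i n^(m+1-i) / (m+1)`, because
`(m+1).choose (i+1) / (m+1) = m.descFactorial i / (i+1)!` and
`D^i X^m = m.descFactorial i • X^(m-i)`.
The theorem follows since `B⁺₁ = 1/2` and `B⁺ₖ = 0` for odd `k ≥ 3`.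
-/

open Polynomial Finset
open scoped Nat

theorem tsum_eq_add_tsum_odd_of_even_eq_zero {M : Type*} [AddCommGroup M] [UniformSpace M]
    [IsUniformAddGroup M] [CompleteSpace M] [T2Space M] {f : ℕ → M} (hf : Summable f)
    (heven : ∀ k, f (2 * (k + 1)) = 0) : ∑' i, f i = f 0 + ∑' k, f (2 * k + 1) := by
  rw [← tsum_even_add_odd (hf.comp_injective (mul_right_injective₀ two_ne_zero))
    (hf.comp_injective ((add_left_injective 1).comp (mul_right_injective₀ two_ne_zero))),
    tsum_eq_single 0 fun k hk ↦ ?_]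
  obtain ⟨k, rfl⟩ := Nat.exists_eq_succ_of_ne_zero hk
  exact heven k

namespace Polynomial

theorem iterate_derivative_eval_eq_of_natDegree_le {R : Type*} [Semiring R] {f : R[X]} {i : ℕ}
    (hi : f.natDegree ≤ i) (x y : R) : (derivative^[i] f).eval x = (derivative^[i] f).eval y := by
  have hconst : (derivative^[i] f).natDegree = 0 := by
    have := natDegree_iterate_derivative f i
    omega
  rw [eq_C_of_natDegree_eq_zero hconst, eval_C, eval_C]

theorem summable_mul_iterate_derivative_eval_sub {R : Type*} [Ring R] [TopologicalSpace R]
    (f : R[X]) (c : ℕ → R) (x y : R) :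
    Summable fun i ↦ c i * ((derivative^[i] f).eval x - (derivative^[i] f).eval y) :=
  summable_of_ne_finset_zero (s := range f.natDegree) fun i hi ↦ by
    rw [iterate_derivative_eval_eq_of_natDegree_le (by simpa using hi) x y, sub_self, mul_zero]

end Polynomial

theorem sum_Icc_pow_eq_add_sum_bernoulli'_mul_descFactorial (n m : ℕ) :
    ∑ k ∈ Icc 1 n, (k : ℝ) ^ m = (n : ℝ) ^ (m + 1) / (m + 1) +
      ∑ i ∈ range m,
        (bernoulli' (i + 1) : ℝ) / (i + 1)! * (m.descFactorial i * (n : ℝ) ^ (m - i)) := by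
  have h := congrArg ((↑) : ℚ → ℝ) (sum_Ico_pow n m)
  push_cast [Ico_add_one_right_eq_Icc] at h
  rw [h, sum_range_succ', add_comm]
  congr 1
  · simp
  refine sum_congr rfl fun i _ ↦ ?_
  have hchoose : ((i + 1)! : ℝ) * (m + 1).choose (i + 1) = (m + 1) * m.descFactorial i := by
    exact_mod_cast (Nat.descFactorial_eq_factorial_mul_choose _ _).symm.trans
      (Nat.succ_descFactorial_succ m i)
  rw [Nat.add_sub_add_right]
  field_simp
  linear_combination (bernoulli' (i + 1) : ℝ) * (n : ℝ) ^ (m - i) * hchoose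

noncomputable def eulerMaclaurinCorrection (x : ℝ) : ℝ[X] →ₗ[ℝ] ℝ where
  toFun f := ∑' i : ℕ, (bernoulli' (i + 1) : ℝ) / (i + 1)! *
    ((derivative^[i] f).eval x - (derivative^[i] f).eval 0)
  map_add' f g := by
    rw [← (summable_mul_iterate_derivative_eval_sub f _ x 0).tsum_add
      (summable_mul_iterate_derivative_eval_sub g _ x 0)]
    congr! 2 with i
    rw [iterate_map_add, eval_add, eval_add]
    ring
  map_smul' a f := by
    rw [RingHom.id_apply, smul_eq_mul, ← tsum_mul_left]
    congr! 2 with i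
    rw [iterate_derivative_smul, eval_smul, eval_smul, smul_eq_mul, smul_eq_mul]
    ring

theorem eulerMaclaurinCorrection_apply (x : ℝ) (f : ℝ[X]) :
    eulerMaclaurinCorrection x f = ∑' i : ℕ, (bernoulli' (i + 1) : ℝ) / (i + 1)! *
      ((derivative^[i] f).eval x - (derivative^[i] f).eval 0) := rfl

theorem eulerMaclaurinCorrection_X_pow (x : ℝ) (m : ℕ) :
    eulerMaclaurinCorrection x (X ^ m) =
      ∑ i ∈ range m,
        (bernoulli' (i + 1) : ℝ) / (i + 1)! * (m.descFactorial i * x ^ (m - i)) := by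
  refine (tsum_eq_sum fun i hi ↦ ?_).trans (sum_congr rfl fun i hi ↦ ?_)
  · rw [iterate_derivative_eval_eq_of_natDegree_le (by simpa using hi) x 0, sub_self, mul_zero]
  · simp [iterate_derivative_X_pow_eq_smul, zero_pow (Nat.sub_ne_zero_of_lt (mem_range.1 hi))]

theorem sum_Icc_eval_eq_integral_add_eulerMaclaurinCorrection (f : ℝ[X]) (n : ℕ) :
    ∑ k ∈ Icc 1 n, f.eval (k : ℝ) =
      (∫ t in (0 : ℝ)..n, f.eval t) + eulerMaclaurinCorrection n f := by
  induction f using Polynomial.induction_on' with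
  | add f g hf hg =>
    simp only [eval_add, sum_add_distrib, map_add, hf, hg]
    rw [intervalIntegral.integral_add (f.continuous.intervalIntegrable _ _)
      (g.continuous.intervalIntegrable _ _)]
    ring
  | monomial m a =>
    simp only [← smul_X_eq_monomial, eval_smul, map_smul, eval_pow, eval_X, smul_eq_mul,
      ← mul_sum, intervalIntegral.integral_const_mul, integral_pow,
      eulerMaclaurinCorrection_X_pow, sum_Icc_pow_eq_add_sum_bernoulli'_mul_descFactorial]
    rw [zero_pow m.succ_ne_zero, sub_zero]
    ring

theorem euler_maclaurin_polynomial (f : Polynomial ℝ) (n : ℕ) :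
    ∑ i ∈ Finset.Icc 1 n, f.eval (i : ℝ)
      = (∫ t in (0:ℝ)..(n : ℝ), f.eval t)
        + (1 / 2) * (f.eval (n : ℝ) - f.eval 0)
        + ∑' p : ℕ,
            (((bernoulli (2 * (p + 1)) : ℚ) : ℝ) / (Nat.factorial (2 * (p + 1)) : ℝ))
              * ((Polynomial.derivative^[2 * (p + 1) - 1] f).eval (n : ℝ)
                 - (Polynomial.derivative^[2 * (p + 1) - 1] f).eval 0) := by
  rw [sum_Icc_eval_eq_integral_add_eulerMaclaurinCorrection, add_assoc,
    eulerMaclaurinCorrection_apply,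
    tsum_eq_add_tsum_odd_of_even_eq_zero (summable_mul_iterate_derivative_eval_sub f _ _ 0)
      fun k ↦ ?_]
  · simp only [zero_add, bernoulli'_one, Nat.factorial_one, Function.iterate_zero_apply]
    congr 2
    · push_cast
      ring
    refine tsum_congr fun p ↦ ?_
    rw [bernoulli_eq_bernoulli'_of_ne_one (by omega), show 2 * (p + 1) - 1 = 2 * p + 1 by omega,
      show 2 * (p + 1) = 2 * p + 1 + 1 by ring]
  · rw [bernoulli'_eq_zero_of_odd ⟨k + 1, rfl⟩ (by omega), Rat.cast_zero, zero_div, zero_mul]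
end

section
/- The Bernoulli numbers satisfy the quadratic recursion (2n+1) b_{2n} = − ∑_{p=1}^{n−1} binom(2n, 2p) b_{2p} b_{2n−2p} for n ≥ 2. -/
/-!
Differentiating `B * (exp X - 1) = X` and eliminating `exp X` shows that the exponential
generating function `B` of the Bernoulli numbers satisfies the Riccati equation
`B² = B - X B - X B'`. Comparing coefficients of `X ^ (2n) / (2n)!` gives
`∑ₖ C(2n, k) bₖ b₂ₙ₋ₖ = (1 - 2n) b₂ₙ`, in which the odd-index terms vanish and the end terms
`k = 0, 2n` contribute `2 b₂ₙ`.
-/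

open PowerSeries Finset
open scoped Nat

theorem bernoulliPowerSeries_sq (A : Type*) [CommRing A] [Algebra ℚ A] :
    bernoulliPowerSeries A ^ 2 =
      bernoulliPowerSeries A - X * bernoulliPowerSeries A
        - X * d⁄dX A (bernoulliPowerSeries A) := by
  set B := bernoulliPowerSeries A
  have hB : B * (exp A - 1) = X := bernoulliPowerSeries_mul_exp_sub_one A
  have hB' : d⁄dX A B * (exp A - 1) + B * exp A = 1 := by
    simpa [Derivation.leibniz, derivative_exp, add_comm, mul_comm] using congrArg (d⁄dX A) hB
  linear_combination B * hB' - d⁄dX A B * hB - B * hB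

theorem sum_range_choose_mul_bernoulli_mul_bernoulli (n : ℕ) :
    ∑ k ∈ range (n + 1), (n.choose k : ℚ) * bernoulli k * bernoulli (n - k)
      = (1 - n) * bernoulli n - n * bernoulli (n - 1) := by
  cases n with
  | zero => simp [bernoulli_zero]
  | succ n =>
  have h := congrArg (coeff (n + 1)) (bernoulliPowerSeries_sq ℚ)
  rw [sq, coeff_mul, Nat.sum_antidiagonal_eq_sum_range_succ_mk, map_sub, map_sub,
    coeff_succ_X_mul, coeff_succ_X_mul, coeff_derivative] at h
  simp only [bernoulliPowerSeries, coeff_mk, Algebra.algebraMap_self, RingHom.id_apply] at h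
  have hterm : ∀ k ∈ range (n + 1 + 1),
      ((n + 1).choose k : ℚ) * bernoulli k * bernoulli (n + 1 - k)
        = (n + 1)! * (bernoulli k / k ! * (bernoulli (n + 1 - k) / (n + 1 - k)!)) := by
    intro k hk
    rw [Nat.cast_choose ℚ (by simpa [Nat.lt_succ_iff] using hk)]
    field_simp
  rw [sum_congr rfl hterm, ← mul_sum, h, Nat.factorial_succ]
  push_cast
  field_simp
  ring

theorem Finset.sum_range_two_mul_add_one {M : Type*} [AddCommMonoid M] (f : ℕ → M) (m : ℕ) :
    ∑ k ∈ range (2 * m + 1), f k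
      = ∑ p ∈ range (m + 1), f (2 * p) + ∑ p ∈ range m, f (2 * p + 1) := by
  induction m with
  | zero => simp
  | succ m ih =>
    rw [show 2 * (m + 1) + 1 = 2 * m + 1 + 1 + 1 by ring, sum_range_succ, sum_range_succ, ih,
      sum_range_succ (fun p => f (2 * p)) (m + 1), sum_range_succ (fun p => f (2 * p + 1)) m,
      show 2 * (m + 1) = 2 * m + 1 + 1 by ring]
    abel

theorem bernoulli_mul_bernoulli_eq_zero_of_odd {k l : ℕ} (hk : Odd k) (hl : Odd l)
    (hkl : 2 < k + l) : bernoulli k * bernoulli l = 0 := by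
  by_cases hk1 : 1 < k
  · rw [bernoulli_eq_zero_of_odd hk hk1, zero_mul]
  · obtain rfl : k = 1 := by have := hk.pos; omega
    rw [bernoulli_eq_zero_of_odd hl (by omega), mul_zero]

theorem bernoulli_quadratic_recursion (n : ℕ) (hn : 2 ≤ n) :
    (2 * n + 1 : ℚ) * bernoulli (2 * n)
      = - ∑ p ∈ Finset.Icc 1 (n - 1),
          (Nat.choose (2 * n) (2 * p) : ℚ) * bernoulli (2 * p) * bernoulli (2 * n - 2 * p) := by
  set g : ℕ → ℚ := fun k => ((2 * n).choose k : ℚ) * bernoulli k * bernoulli (2 * n - k)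
  have odd_terms : ∀ p ∈ range n, g (2 * p + 1) = 0 := fun p hp => by
    have hodd : Odd (2 * n - (2 * p + 1)) := ⟨n - p - 1, by grind⟩
    simp only [g, mul_assoc,
      bernoulli_mul_bernoulli_eq_zero_of_odd (odd_two_mul_add_one p) hodd (by omega), mul_zero]
  have even_terms : ∑ p ∈ range (n + 1), g (2 * p)
      = 2 * bernoulli (2 * n) + ∑ p ∈ Icc 1 (n - 1), g (2 * p) := by
    rw [sum_range_succ, range_eq_Ico, sum_eq_sum_Ico_succ_bot (by omega),
      ← Icc_sub_one_right_eq_Ico_of_not_isMin (by rw [isMin_iff_eq_bot, Nat.bot_eq_zero]; omega)]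
    simp only [g, mul_zero, Nat.choose_zero_right, Nat.cast_one, bernoulli_zero, mul_one,
      tsub_zero, one_mul, zero_add, Nat.choose_self, tsub_self]
    ring
  have hconv := sum_range_choose_mul_bernoulli_mul_bernoulli (2 * n)
  rw [sum_range_two_mul_add_one, sum_eq_zero odd_terms, add_zero, even_terms,
    bernoulli_eq_zero_of_odd (n := 2 * n - 1) ⟨n - 1, by omega⟩ (by omega)] at hconv
  push_cast at hconv
  linear_combination hconv
end

section
/- Multiplication formula for sine: for every positive integer n and complex z, sin(nz) = 2^{n−1} ∏_{k=0}^{n−1} sin(z + kπ/n). -/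
/-!
Write `2 sin w = i e^{-iw} (1 - e^{2iw})`. For `w_k = z + kπ/n` the numbers `e^{2iw_k}` are
`ζ^k e^{2iz}` with `ζ = e^{2πi/n}` a primitive `n`-th root of unity, so the second factors
multiply to `1 - e^{2inz}`; the first factors multiply to `iⁿ e^{-inz} (-i)^{n-1}` because
`∑ w_k = nz + (n-1)π/2`. Together this is `i e^{-inz} (1 - e^{2inz}) = 2 sin (nz)`.
-/

open Complex Finset
open scoped Real

theorem IsPrimitiveRoot.pow_sub_pow_eq_prod_range_sub_mul {R : Type*} [CommRing R] [IsDomain R]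
    {ζ : R} {n : ℕ} (hζ : IsPrimitiveRoot ζ n) (hn : 0 < n) (x y : R) :
    x ^ n - y ^ n = ∏ k ∈ range n, (x - ζ ^ k * y) := by
  simpa [Polynomial.eval_prod] using
    congrArg (Polynomial.eval x) (X_pow_sub_C_eq_prod hζ hn (rfl : y ^ n = y ^ n))

theorem Finset.sum_range_natCast_mul_two {K : Type*} [CommRing K] (n : ℕ) :
    (∑ k ∈ range n, (k : K)) * 2 = n * (n - 1) := by
  induction n with
  | zero => simp
  | succ n ih => rw [sum_range_succ, add_mul, ih]; push_cast; ring

theorem Finset.sum_range_add_mul_div {K : Type*} [Field K] [CharZero K] {n : ℕ} (hn : n ≠ 0)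
    (a c : K) : ∑ k ∈ range n, (a + k * c / n) = n * a + (n - 1) * c / 2 := by
  have hn' : (n : K) ≠ 0 := Nat.cast_ne_zero.mpr hn
  rw [sum_add_distrib, sum_const, card_range, nsmul_eq_mul, ← sum_div, ← sum_mul]
  field_simp
  linear_combination c * sum_range_natCast_mul_two (K := K) n

namespace Complex

theorem two_mul_sin_eq (w : ℂ) : 2 * sin w = I * exp (-w * I) * (1 - exp (2 * w * I)) := by
  have h : exp (-w * I) * exp (w * I) = 1 := by rw [← exp_add, neg_mul, neg_add_cancel, exp_zero]
  rw [sin, show 2 * w * I = w * I + w * I by ring, exp_add]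
  linear_combination I * exp (w * I) * h

theorem prod_range_one_sub_exp {n : ℕ} (hn : 0 < n) (z : ℂ) :
    ∏ k ∈ range n, (1 - exp (2 * (z + k * π / n) * I)) = 1 - exp (2 * (n * z) * I) := by
  have hζ := isPrimitiveRoot_exp n hn.ne'
  have hfactor (k : ℕ) :
      exp (2 * (z + k * π / n) * I) = exp (2 * π * I / n) ^ k * exp (2 * z * I) := by
    rw [← exp_nat_mul, ← exp_add]
    ring_nf
  rw [prod_congr rfl fun k _ => by rw [hfactor k], ← one_pow n,
    ← hζ.pow_sub_pow_eq_prod_range_sub_mul hn, ← exp_nat_mul]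
  ring_nf

theorem prod_range_exp_neg_mul_I {n : ℕ} (hn : 0 < n) (z : ℂ) :
    ∏ k ∈ range n, exp (-(z + k * π / n) * I) = exp (-(n * z) * I) * (-I) ^ (n - 1) := by
  rw [← exp_sum, ← sum_mul, sum_neg_distrib, sum_range_add_mul_div hn.ne',
    ← exp_neg_pi_div_two_mul_I, ← exp_nat_mul, ← exp_add, Nat.cast_pred hn]
  ring_nf

end Complex

theorem sin_multiplication_formula (n : ℕ) (hn : 0 < n) (z : ℂ) :
    Complex.sin (n * z)
      = 2 ^ (n - 1) * ∏ k ∈ Finset.range n, Complex.sin (z + k * Real.pi / n) := by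
  have hI : I ^ n * (-I) ^ (n - 1) = I := by
    rw [← Nat.sub_add_cancel hn, pow_succ, Nat.add_sub_cancel, mul_right_comm, ← mul_pow]
    simp
  refine mul_left_cancel₀ two_ne_zero ?_
  calc 2 * sin (n * z)
        = I ^ n * (-I) ^ (n - 1) * exp (-(n * z) * I) * (1 - exp (2 * (n * z) * I)) := by
        rw [hI, two_mul_sin_eq]
    _ = ∏ k ∈ range n,
          (I * exp (-(z + k * π / n) * I) * (1 - exp (2 * (z + k * π / n) * I))) := by
        rw [prod_mul_distrib, prod_mul_distrib, prod_const, card_range,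
          prod_range_exp_neg_mul_I hn, prod_range_one_sub_exp hn]
        ring
    _ = ∏ k ∈ range n, 2 * sin (z + k * π / n) :=
        prod_congr rfl fun k _ => (two_mul_sin_eq _).symm
    _ = 2 * (2 ^ (n - 1) * ∏ k ∈ range n, sin (z + k * π / n)) := by
        rw [prod_mul_distrib, prod_const, card_range, ← mul_assoc, ← pow_succ',
          Nat.sub_add_cancel hn]
end

section
/- Partial fraction expansion of cotangent: for z ∈ ℂ not an integer multiple of π, cot z = 1/z + ∑_{p=1}^∞ 2z/(z² − p²π²). -/
/-! The Mittag-Leffler expansion `π cot (π x) = 1/x + ∑ (1/(x - n) + 1/(x + n))`, obtained from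
the logarithmic derivative of Euler's sine product, is rescaled to `x = z / π`, the terms at `±n`
being paired into `2x / (x² - n²)`. -/

open Complex

lemma Complex.div_pi_mem_integerComplement {z : ℂ} (hz : ∀ m : ℤ, z ≠ m * Real.pi) :
    z / Real.pi ∈ integerComplement := by
  rintro ⟨m, hm⟩
  exact hz m (by rw [hm, div_mul_cancel₀ _ (ofReal_ne_zero.mpr Real.pi_ne_zero)])

lemma Complex.pi_mul_cot_pi_mul_eq_tsum {x : ℂ} (hx : x ∈ integerComplement) :
    Real.pi * cot (Real.pi * x) = 1 / x + ∑' n : ℕ, 2 * x / (x ^ 2 - ((n : ℂ) + 1) ^ 2) := by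
  have hterm (n : ℕ) : cotTerm x n = 2 * x / (x ^ 2 - ((n : ℂ) + 1) ^ 2) := by
    rw [cotTerm_identity hx]
    ring
  rw [← tsum_congr hterm, ← cot_series_rep' hx]
  ring

lemma two_mul_div_sq_sub_sq_div {K : Type*} [Field K] (z a c : K) (hc : c ≠ 0) :
    2 * (z / c) / ((z / c) ^ 2 - a ^ 2) = c * (2 * z / (z ^ 2 - a ^ 2 * c ^ 2)) := by
  rw [div_pow, div_sub' (pow_ne_zero 2 hc), div_div_eq_mul_div, mul_comm (c ^ 2)]
  field_simp

theorem cot_partial_fractions (z : ℂ) (hz : ∀ m : ℤ, z ≠ m * Real.pi) :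
    Complex.cos z / Complex.sin z
      = 1 / z + ∑' p : ℕ, 2 * z / (z ^ 2 - ((p : ℂ) + 1) ^ 2 * Real.pi ^ 2) := by
  have hπ : (Real.pi : ℂ) ≠ 0 := ofReal_ne_zero.mpr Real.pi_ne_zero
  have h := pi_mul_cot_pi_mul_eq_tsum (div_pi_mem_integerComplement hz)
  simp only [two_mul_div_sq_sub_sq_div _ _ _ hπ, tsum_mul_left, mul_div_cancel₀ _ hπ] at h
  rw [← cot, ← mul_left_inj' hπ, mul_comm, h]
  field_simp
end

section
/- Integral representation of Bernoulli numbers: for every n ≥ 1, (−1)^{n−1} b_{2n} = 4n ∫₀^∞ t^{2n−1}/(e^{2πt} − 1) dt. -/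
open MeasureTheory Set Real
open scoped Nat

/-!
Expanding `1 / (e^{2πt} - 1) = ∑_{k ≥ 1} e^{-2πkt}` and integrating term by term (legitimate since
all terms are nonnegative), the Gamma integral `∫₀^∞ t^{2n-1} e^{-2πkt} dt = (2n-1)! / (2πk)^{2n}`
turns the integral into `(2n-1)! ζ(2n) / (2π)^{2n}`, and Euler's evaluation of `ζ(2n)` in terms
of `b_{2n}` gives the result.
-/

lemma hasSum_exp_neg_succ_mul {x : ℝ} (hx : 0 < x) :
    HasSum (fun k : ℕ => exp (-((k + 1) * x))) (1 / (exp x - 1)) := by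
  have hq : exp (-x) < 1 := exp_lt_one_iff.mpr (neg_neg_of_pos hx)
  have hsum_eq : exp (-x) * (1 - exp (-x))⁻¹ = 1 / (exp x - 1) := by
    have : exp x - 1 ≠ 0 := (sub_pos.mpr (one_lt_exp_iff.mpr hx)).ne'
    rw [exp_neg]
    field_simp
  refine hsum_eq ▸ ((hasSum_geometric_of_lt_one (exp_pos _).le hq).mul_left _).congr_fun
    fun k => ?_
  rw [← exp_nat_mul, ← exp_add]
  ring_nf

lemma integrableOn_pow_mul_exp_neg_mul_Ioi (m : ℕ) {r : ℝ} (hr : 0 < r) :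
    IntegrableOn (fun t : ℝ => t ^ m * exp (-(r * t))) (Ioi 0) := by
  refine (integrableOn_rpow_mul_exp_neg_mul_rpow (s := m) (by linarith [m.cast_nonneg (α := ℝ)])
    one_pos hr).congr_fun (fun t _ => ?_) measurableSet_Ioi
  simp only [rpow_natCast, rpow_one, neg_mul]

lemma integral_pow_mul_exp_neg_mul_Ioi (m : ℕ) {r : ℝ} (hr : 0 < r) :
    ∫ t in Ioi (0 : ℝ), t ^ m * exp (-(r * t)) = m ! / r ^ (m + 1) := by
  have h := integral_rpow_mul_exp_neg_mul_Ioi (a := m + 1) (by positivity) hr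
  simp only [add_sub_cancel_right, rpow_natCast, Gamma_nat_eq_factorial] at h
  rw [h, ← Nat.cast_succ, rpow_natCast, one_div, inv_pow, inv_mul_eq_div]

theorem hasSum_integral_pow_div_exp_mul_sub_one {m : ℕ} (hm : 1 ≤ m) {r : ℝ} (hr : 0 < r) :
    HasSum (fun k : ℕ => (m ! : ℝ) / (r * (k + 1)) ^ (m + 1))
      (∫ t in Ioi (0 : ℝ), t ^ m / (exp (r * t) - 1)) := by
  set F : ℕ → ℝ → ℝ := fun k t => t ^ m * exp (-(r * (k + 1) * t))
  have hrk (k : ℕ) : 0 < r * (k + 1) := by positivity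
  have hF_int (k : ℕ) : ∫ t in Ioi (0 : ℝ), F k t = m ! / (r * (k + 1)) ^ (m + 1) :=
    integral_pow_mul_exp_neg_mul_Ioi m (hrk k)
  have hF_norm (k : ℕ) : ∫ t in Ioi (0 : ℝ), ‖F k t‖ = ∫ t in Ioi (0 : ℝ), F k t :=
    setIntegral_congr_fun measurableSet_Ioi fun t (ht : 0 < t) =>
      norm_of_nonneg (by positivity)
  have hsummable : Summable fun k : ℕ => (m ! : ℝ) / (r * (k + 1)) ^ (m + 1) := by
    have h := (summable_nat_add_iff 1).mpr
      (Real.summable_one_div_nat_pow.mpr (by omega : 1 < m + 1))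
    refine (h.mul_left ((m ! : ℝ) / r ^ (m + 1))).congr fun k => ?_
    push_cast
    rw [mul_pow]
    field_simp
  have hsum_eq : ∀ t ∈ Ioi (0 : ℝ), ∑' k, F k t = t ^ m / (exp (r * t) - 1) := fun t ht => by
    rw [div_eq_mul_one_div, ← (hasSum_exp_neg_succ_mul (mul_pos hr ht)).tsum_eq, ← tsum_mul_left]
    exact tsum_congr fun k => by simp only [F]; ring_nf
  have h := hasSum_integral_of_summable_integral_norm
    (fun k => integrableOn_pow_mul_exp_neg_mul_Ioi m (hrk k))
    (hsummable.congr fun k => ((hF_norm k).trans (hF_int k)).symm)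
  rw [setIntegral_congr_fun measurableSet_Ioi hsum_eq] at h
  exact h.congr_fun fun k => (hF_int k).symm

lemma hasSum_one_div_nat_succ_pow_iff {p : ℕ} (hp : p ≠ 0) {a : ℝ} :
    HasSum (fun k : ℕ => 1 / ((k : ℝ) + 1) ^ p) a ↔ HasSum (fun k : ℕ => 1 / (k : ℝ) ^ p) a := by
  rw [← hasSum_nat_add_iff' 1 (f := fun k : ℕ => 1 / (k : ℝ) ^ p)]
  simp [hp]

theorem bernoulli_integral_representation (n : ℕ) (hn : 1 ≤ n) :
    (-1 : ℝ) ^ (n - 1) * ((bernoulli (2 * n) : ℚ) : ℝ)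
      = 4 * n * ∫ t in Set.Ioi (0 : ℝ), t ^ (2 * n - 1) / (Real.exp (2 * Real.pi * t) - 1) := by
  obtain ⟨m, rfl⟩ := Nat.exists_eq_add_of_le' hn
  have hzeta := (hasSum_one_div_nat_succ_pow_iff (by omega)).mpr
    (hasSum_zeta_nat (k := m + 1) (by omega))
  rw [show 2 * (m + 1) - 1 = 2 * m + 1 by omega] at hzeta ⊢
  have hint := hasSum_integral_pow_div_exp_mul_sub_one (m := 2 * m + 1) (by omega) two_pi_pos
  have hint_eq := hint.unique <|
    (hzeta.mul_left (((2 * m + 1) ! : ℝ) / (2 * π) ^ (2 * m + 2))).congr_fun fun k => by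
      rw [mul_pow, show 2 * m + 1 + 1 = 2 * (m + 1) by ring]
      field_simp
  rw [hint_eq, m.add_sub_cancel,
    show (2 * (m + 1))! = (2 * m + 2) * (2 * m + 1)! from Nat.factorial_succ _]
  push_cast
  field_simp
  ring
end
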